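/- Let U be a nonempty connected open subset of (0,∞) × (0,∞) ⊆ ℝ². Consider on U the metric g with components E = 0, F = (y²+x)/2, G = 0 (i.e. ds²_g = (y²+x) dx dy). Then every smooth Killing vector field of g on U is identically zero. -/

import Mathlib

noncomputable section

/-- The partial derivative of `f : ℝ² → ℝ` in the `i`-th coordinate direction
(`0 ↦ x`, `1 ↦ y`). -/
def pd (i : Fin 2) (f : ℝ × ℝ → ℝ) (p : ℝ × ℝ) : ℝ :=
  fderiv ℝ f p (if i = 0 then ((1 : ℝ), (0 : ℝ)) else ((0 : ℝ), (1 : ℝ)))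

/-- The components of the metric `g = E dx² + 2F dx dy + G dy²`. -/
def gc (E F G : ℝ × ℝ → ℝ) (i j : Fin 2) : ℝ × ℝ → ℝ := fun p =>
  if i = 0 then (if j = 0 then E p else F p) else (if j = 0 then F p else G p)

/-- The components of the inverse metric. -/
def gInv (E F G : ℝ × ℝ → ℝ) (i j : Fin 2) : ℝ × ℝ → ℝ := fun p =>
  (if i = 0 then (if j = 0 then G p else -F p) else (if j = 0 then -F p else E p)) /
    (E p * G p - F p ^ 2)

/-- The Christoffel symbols `Γ^i_{jk}` of the metric `(E,F,G)`. -/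
def Chr (E F G : ℝ × ℝ → ℝ) (i j k : Fin 2) : ℝ × ℝ → ℝ := fun p =>
  (1 / 2) * ∑ m : Fin 2, gInv E F G i m p *
    (pd j (gc E F G m k) p + pd k (gc E F G m j) p - pd m (gc E F G j k) p)

/-- The projective connection coefficient `K₀ = -Γ²₁₁`. -/
def pK0 (E F G : ℝ × ℝ → ℝ) : ℝ × ℝ → ℝ := fun p => - Chr E F G 1 0 0 p
/-- The projective connection coefficient `K₁ = Γ¹₁₁ - 2Γ²₁₂`. -/
def pK1 (E F G : ℝ × ℝ → ℝ) : ℝ × ℝ → ℝ := fun p => Chr E F G 0 0 0 p - 2 * Chr E F G 1 0 1 p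
/-- The projective connection coefficient `K₂ = -Γ²₂₂ + 2Γ¹₁₂`. -/
def pK2 (E F G : ℝ × ℝ → ℝ) : ℝ × ℝ → ℝ := fun p => - Chr E F G 1 1 1 p + 2 * Chr E F G 0 0 1 p
/-- The projective connection coefficient `K₃ = Γ¹₂₂`. -/
def pK3 (E F G : ℝ × ℝ → ℝ) : ℝ × ℝ → ℝ := fun p => Chr E F G 0 1 1 p

/-- The linear system (12). -/
def Sys12 (K₀ K₁ K₂ K₃ a11 a12 a22 : ℝ × ℝ → ℝ) (U : Set (ℝ × ℝ)) : Prop :=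
  ∀ p ∈ U,
    pd 0 a11 p - (2/3) * K₁ p * a11 p + 2 * K₀ p * a12 p = 0 ∧
    pd 1 a11 p + 2 * pd 0 a12 p - (4/3) * K₂ p * a11 p + (2/3) * K₁ p * a12 p
      + 2 * K₀ p * a22 p = 0 ∧
    2 * pd 1 a12 p + pd 0 a22 p - 2 * K₃ p * a11 p - (2/3) * K₂ p * a12 p
      + (4/3) * K₁ p * a22 p = 0 ∧
    pd 1 a22 p - 2 * K₃ p * a12 p + (2/3) * K₂ p * a22 p = 0

/-- The components of a vector field `v = (v¹, v²)`. -/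
def vc (v1 v2 : ℝ × ℝ → ℝ) (m : Fin 2) : ℝ × ℝ → ℝ := fun p => if m = 0 then v1 p else v2 p

/-- `v = (v1, v2)` is a Killing vector field for the metric `(E,F,G)` on `U`. -/
def IsKilling (E F G v1 v2 : ℝ × ℝ → ℝ) (U : Set (ℝ × ℝ)) : Prop :=
  ∀ p ∈ U, ∀ i j : Fin 2,
    (∑ m : Fin 2, (vc v1 v2 m p * pd m (gc E F G i j) p
      + gc E F G m j p * pd i (vc v1 v2 m) p
      + gc E F G i m p * pd j (vc v1 v2 m) p)) = 0


/-!
Since `E = G = 0`, the diagonal Killing equations say `∂ₓv² = ∂ᵧv¹ = 0`, so `v¹ = a(x)` and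
`v² = b(y)`, and the mixed one becomes `a + 2y b + (y² + x)(a' + b') = 0`. Differentiating this
identity in `x` and `y` (the mixed partials of `a`, `b` vanish) and using `y ≠ 0` gives first
`a'' = b'' = 0`, then `2a' + b' = 0` and `a' + 3b' = 0`, hence `a' = b' = 0`, and finally
`a = b = 0`.
-/

section PartialDerivative

variable {f g w : ℝ × ℝ → ℝ} {p : ℝ × ℝ} {U : Set (ℝ × ℝ)}

lemma pd_const (i : Fin 2) (c : ℝ) : pd i (fun _ => c) p = 0 := by simp [pd]

lemma pd_zero_fst : pd 0 (fun q : ℝ × ℝ => q.1) p = 1 := by simp [pd, fderiv_fst]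

lemma pd_one_fst : pd 1 (fun q : ℝ × ℝ => q.1) p = 0 := by simp [pd, fderiv_fst]

lemma pd_zero_snd : pd 0 (fun q : ℝ × ℝ => q.2) p = 0 := by simp [pd, fderiv_snd]

lemma pd_one_snd : pd 1 (fun q : ℝ × ℝ => q.2) p = 1 := by simp [pd, fderiv_snd]

lemma pd_add (i : Fin 2) (hf : DifferentiableAt ℝ f p) (hg : DifferentiableAt ℝ g p) :
    pd i (fun q => f q + g q) p = pd i f p + pd i g p := by
  simp [pd, fderiv_fun_add hf hg]

lemma pd_mul (i : Fin 2) (hf : DifferentiableAt ℝ f p) (hg : DifferentiableAt ℝ g p) :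
    pd i (fun q => f q * g q) p = pd i f p * g p + f p * pd i g p := by
  simp [pd, fderiv_fun_mul hf hg]; ring

lemma pd_div_const (i : Fin 2) (c : ℝ) (hf : DifferentiableAt ℝ f p) :
    pd i (fun q => f q / c) p = pd i f p / c := by
  simp only [div_eq_mul_inv]
  rw [pd_mul i hf (differentiableAt_const _), pd_const, mul_zero, add_zero]

lemma pd_pow (i : Fin 2) (n : ℕ) (hf : DifferentiableAt ℝ f p) :
    pd i (fun q => f q ^ n) p = n * f p ^ (n - 1) * pd i f p := by
  simp [pd, fderiv_fun_pow n hf]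

lemma pd_eq_zero_on (hU : IsOpen U) (h : ∀ q ∈ U, w q = 0) (i : Fin 2) :
    ∀ q ∈ U, pd i w q = 0 := by
  intro q hq
  have hw : w =ᶠ[nhds q] fun _ => 0 := Filter.eventually_of_mem (hU.mem_nhds hq) h
  rw [pd, hw.fderiv_eq]
  simp

lemma ContDiffOn.pd_of_isOpen {m n : WithTop ℕ∞} (hf : ContDiffOn ℝ n f U) (hU : IsOpen U)
    (hmn : m + 1 ≤ n) (i : Fin 2) : ContDiffOn ℝ m (pd i f) U :=
  (hf.fderiv_of_isOpen hU hmn).clm_apply contDiffOn_const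

lemma ContDiffOn.differentiableAt_pd {n : WithTop ℕ∞} (hf : ContDiffOn ℝ n f U) (hU : IsOpen U)
    (hn : 2 ≤ n) (i : Fin 2) (hp : p ∈ U) : DifferentiableAt ℝ (pd i f) p :=
  ((hf.pd_of_isOpen hU (m := 1) (by rwa [one_add_one_eq_two]) i).differentiableOn
    one_ne_zero).differentiableAt (hU.mem_nhds hp)

lemma pd_comm (hf : ContDiffAt ℝ 2 f p) (i j : Fin 2) :
    pd i (pd j f) p = pd j (pd i f) p := by
  have hd : DifferentiableAt ℝ (fderiv ℝ f) p :=
    (hf.fderiv_right (m := 1) le_rfl).differentiableAt one_ne_zero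
  have key : ∀ v w : ℝ × ℝ, fderiv ℝ (fun q => fderiv ℝ f q v) p w
      = fderiv ℝ (fderiv ℝ f) p w v := by
    intro v w
    simp [fderiv_clm_apply hd (differentiableAt_const v)]
  change fderiv ℝ (fun q => fderiv ℝ f q _) p _ = fderiv ℝ (fun q => fderiv ℝ f q _) p _
  rw [key, key]
  exact hf.isSymmSndFDerivAt (by simp) _ _

lemma pd_pd_eq_zero_on (hU : IsOpen U) (hf : ContDiffOn ℝ 2 f U) {j : Fin 2}
    (h : ∀ q ∈ U, pd j f q = 0) (i : Fin 2) : ∀ q ∈ U, pd j (pd i f) q = 0 := by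
  intro q hq
  rw [pd_comm (hf.contDiffAt (hU.mem_nhds hq))]
  exact pd_eq_zero_on hU h i q hq

end PartialDerivative

lemma IsKilling.null_metric_eqs {F v1 v2 : ℝ × ℝ → ℝ} {U : Set (ℝ × ℝ)} {p : ℝ × ℝ}
    (h : IsKilling (fun _ => 0) F (fun _ => 0) v1 v2 U) (hp : p ∈ U) :
    F p * pd 0 v2 p = 0 ∧ F p * pd 1 v1 p = 0 ∧
      v1 p * pd 0 F p + v2 p * pd 1 F p + F p * (pd 0 v1 p + pd 1 v2 p) = 0 := by
  have h00 := h p hp 0 0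
  have h11 := h p hp 1 1
  have h01 := h p hp 0 1
  unfold gc vc at h00 h11 h01
  simp only [Fin.sum_univ_two, Fin.isValue, if_true, one_ne_zero, if_false, pd_const,
    mul_zero, zero_mul, add_zero, zero_add] at h00 h11 h01
  exact ⟨by linarith, by linarith, by linarith⟩

section KillingSystem

variable {U : Set (ℝ × ℝ)} {a b : ℝ × ℝ → ℝ}

lemma killing_system_pd_x (hU : IsOpen U) (ha : ContDiffOn ℝ 2 a U) (hb : ContDiffOn ℝ 2 b U)
    (hbx : ∀ q ∈ U, pd 0 b q = 0)
    (h : ∀ q ∈ U, a q + 2 * q.2 * b q + (q.2 ^ 2 + q.1) * (pd 0 a q + pd 1 b q) = 0) :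
    ∀ q ∈ U, 2 * pd 0 a q + pd 1 b q + (q.2 ^ 2 + q.1) * pd 0 (pd 0 a) q = 0 := by
  intro q hq
  -- the anonymous differentiability facts are what `fun_prop` discharges `pd_add`, `pd_mul` with
  have := (ha.differentiableOn two_ne_zero).differentiableAt (hU.mem_nhds hq)
  have := (hb.differentiableOn two_ne_zero).differentiableAt (hU.mem_nhds hq)
  have := ha.differentiableAt_pd hU le_rfl 0 hq
  have := hb.differentiableAt_pd hU le_rfl 1 hq
  have hd := pd_eq_zero_on hU h 0 q hq
  simp (disch := fun_prop) only [pd_add, pd_mul, pd_pow, pd_const, pd_zero_fst, pd_zero_snd] at hd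
  simp only [hbx q hq, pd_pd_eq_zero_on hU hb hbx 1 q hq] at hd
  linarith

lemma killing_system_pd_pd_eq_zero (hU : IsOpen U) (hy : ∀ q ∈ U, q.2 ≠ 0)
    (ha : ContDiffOn ℝ 3 a U) (hb : ContDiffOn ℝ 3 b U)
    (hay : ∀ q ∈ U, pd 1 a q = 0) (hbx : ∀ q ∈ U, pd 0 b q = 0)
    (h : ∀ q ∈ U, 2 * pd 0 a q + pd 1 b q + (q.2 ^ 2 + q.1) * pd 0 (pd 0 a) q = 0) :
    ∀ q ∈ U, pd 0 (pd 0 a) q = 0 ∧ pd 1 (pd 1 b) q = 0 := by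
  have hA : ContDiffOn ℝ 2 (pd 0 a) U := ha.pd_of_isOpen hU (by norm_num) 0
  have hB : ContDiffOn ℝ 2 (pd 1 b) U := hb.pd_of_isOpen hU (by norm_num) 1
  have hAy := pd_pd_eq_zero_on hU (ha.of_le (by norm_num)) hay 0
  have hBx := pd_pd_eq_zero_on hU (hb.of_le (by norm_num)) hbx 1
  have hdy : ∀ q ∈ U, pd 1 (pd 1 b) q + 2 * q.2 * pd 0 (pd 0 a) q = 0 := by
    intro q hq
    have := ha.differentiableAt_pd hU (by norm_num) 0 hq
    have := hb.differentiableAt_pd hU (by norm_num) 1 hq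
    have := hA.differentiableAt_pd hU le_rfl 0 hq
    have hd := pd_eq_zero_on hU h 1 q hq
    simp (disch := fun_prop) only [pd_add, pd_mul, pd_pow, pd_const, pd_one_fst, pd_one_snd] at hd
    simp only [hAy q hq, pd_pd_eq_zero_on hU hA hAy 0 q hq, Nat.cast_ofNat, Nat.reduceSub,
      pow_one] at hd
    linarith
  have hAxx : ∀ q ∈ U, pd 0 (pd 0 (pd 0 a)) q = 0 := by
    intro q hq
    have := hA.differentiableAt_pd hU le_rfl 0 hq
    have := hB.differentiableAt_pd hU le_rfl 1 hq
    have hd := pd_eq_zero_on hU hdy 0 q hq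
    simp (disch := fun_prop) only [pd_add, pd_mul, pd_const, pd_zero_snd] at hd
    simp only [pd_pd_eq_zero_on hU hB hBx 1 q hq] at hd
    have : 2 * q.2 * pd 0 (pd 0 (pd 0 a)) q = 0 := by linarith
    simpa [hy q hq] using this
  intro q hq
  have := ha.differentiableAt_pd hU (by norm_num) 0 hq
  have := hb.differentiableAt_pd hU (by norm_num) 1 hq
  have := hA.differentiableAt_pd hU le_rfl 0 hq
  have hd := pd_eq_zero_on hU h 0 q hq
  simp (disch := fun_prop) only [pd_add, pd_mul, pd_pow, pd_const, pd_zero_fst, pd_zero_snd] at hd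
  simp only [hAxx q hq, hBx q hq] at hd
  have hAx : pd 0 (pd 0 a) q = 0 := by linarith
  exact ⟨hAx, by simpa [hAx] using hdy q hq⟩

lemma killing_system_eq_zero (hU : IsOpen U) (hy : ∀ q ∈ U, q.2 ≠ 0)
    (ha : ContDiffOn ℝ 3 a U) (hb : ContDiffOn ℝ 3 b U)
    (hay : ∀ q ∈ U, pd 1 a q = 0) (hbx : ∀ q ∈ U, pd 0 b q = 0)
    (h : ∀ q ∈ U, a q + 2 * q.2 * b q + (q.2 ^ 2 + q.1) * (pd 0 a q + pd 1 b q) = 0) :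
    ∀ q ∈ U, a q = 0 ∧ b q = 0 := by
  have hdx := killing_system_pd_x hU (ha.of_le (by norm_num)) (hb.of_le (by norm_num)) hbx h
  have hAxx := killing_system_pd_pd_eq_zero hU hy ha hb hay hbx hdx
  have hAy := pd_pd_eq_zero_on hU (ha.of_le (by norm_num)) hay 0
  have hdy : ∀ q ∈ U, b q + q.2 * (pd 0 a q + 2 * pd 1 b q) = 0 := by
    intro q hq
    have := (ha.differentiableOn (by norm_num)).differentiableAt (hU.mem_nhds hq)
    have := (hb.differentiableOn (by norm_num)).differentiableAt (hU.mem_nhds hq)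
    have := ha.differentiableAt_pd hU (by norm_num) 0 hq
    have := hb.differentiableAt_pd hU (by norm_num) 1 hq
    have hd := pd_eq_zero_on hU h 1 q hq
    simp (disch := fun_prop) only [pd_add, pd_mul, pd_pow, pd_const, pd_one_fst, pd_one_snd] at hd
    simp only [hay q hq, hAy q hq, (hAxx q hq).2, Nat.cast_ofNat, Nat.reduceSub, pow_one] at hd
    linarith
  have hdyy : ∀ q ∈ U, pd 0 a q + 3 * pd 1 b q = 0 := by
    intro q hq
    have := (hb.differentiableOn (by norm_num)).differentiableAt (hU.mem_nhds hq)
    have := ha.differentiableAt_pd hU (by norm_num) 0 hq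
    have := hb.differentiableAt_pd hU (by norm_num) 1 hq
    have hd := pd_eq_zero_on hU hdy 1 q hq
    simp (disch := fun_prop) only [pd_add, pd_mul, pd_const, pd_one_snd] at hd
    simp only [hAy q hq, (hAxx q hq).2] at hd
    linarith
  intro q hq
  have hAB : 2 * pd 0 a q + pd 1 b q = 0 := by simpa [(hAxx q hq).1] using hdx q hq
  have hA : pd 0 a q = 0 := by linarith [hdyy q hq]
  have hB : pd 1 b q = 0 := by linarith [hdyy q hq]
  have hb0 : b q = 0 := by simpa [hA, hB] using hdy q hq
  exact ⟨by simpa [hA, hB, hb0] using h q hq, hb0⟩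

end KillingSystem

theorem stmt19_general
    (U : Set (ℝ × ℝ)) (hUopen : IsOpen U)
    (hUsub : U ⊆ (Set.Ioi 0 ×ˢ Set.Ioi 0 : Set (ℝ × ℝ)))
    (E F G : ℝ × ℝ → ℝ)
    (hE : ∀ p, E p = 0)
    (hF : ∀ p, F p = (p.2 ^ 2 + p.1) / 2)
    (hG : ∀ p, G p = 0) :
    ∀ v1 v2 : ℝ × ℝ → ℝ, ContDiffOn ℝ (⊤ : ℕ∞) v1 U → ContDiffOn ℝ (⊤ : ℕ∞) v2 U →
      IsKilling E F G v1 v2 U → ∀ p ∈ U, v1 p = 0 ∧ v2 p = 0 := by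
  obtain rfl : E = fun _ => 0 := funext hE
  obtain rfl : G = fun _ => 0 := funext hG
  obtain rfl : F = fun p => (p.2 ^ 2 + p.1) / 2 := funext hF
  intro v1 v2 hv1 hv2 hK
  have hF0 : ∀ q ∈ U, (q.2 ^ 2 + q.1) / 2 ≠ 0 := fun q hq =>
    (div_pos (add_pos_of_nonneg_of_pos (sq_nonneg _) (hUsub hq).1) two_pos).ne'
  have hFx : ∀ q, pd 0 (fun p => (p.2 ^ 2 + p.1) / 2) q = 1 / 2 := fun q => by
    simp (disch := fun_prop) only [pd_div_const, pd_add, pd_pow, pd_zero_fst, pd_zero_snd]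
    ring
  have hFy : ∀ q, pd 1 (fun p => (p.2 ^ 2 + p.1) / 2) q = q.2 := fun q => by
    simp (disch := fun_prop) only [pd_div_const, pd_add, pd_pow, pd_one_fst, pd_one_snd]
    ring
  refine killing_system_eq_zero hUopen (fun q hq => (hUsub hq).2.ne')
    (hv1.of_le (WithTop.coe_le_coe.2 le_top)) (hv2.of_le (WithTop.coe_le_coe.2 le_top))
    (fun q hq => ?_) (fun q hq => ?_) (fun q hq => ?_)
  · exact (mul_eq_zero.1 (hK.null_metric_eqs hq).2.1).resolve_left (hF0 q hq)
  · exact (mul_eq_zero.1 (hK.null_metric_eqs hq).1).resolve_left (hF0 q hq)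
  · have := (hK.null_metric_eqs hq).2.2
    rw [hFx, hFy] at this
    linarith

/-- The metric of case 3d, `ds² = (y²+x)dxdy`, admits no nontrivial
Killing vector field on any nonempty connected open subset of `(0,∞)×(0,∞)`. -/
theorem stmt19
    (U : Set (ℝ × ℝ)) (hUopen : IsOpen U) (hUconn : IsConnected U)
    (hUsub : U ⊆ (Set.Ioi 0 ×ˢ Set.Ioi 0 : Set (ℝ × ℝ)))
    (E F G : ℝ × ℝ → ℝ)
    (hE : ∀ p, E p = 0)
    (hF : ∀ p, F p = (p.2 ^ 2 + p.1) / 2)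
    (hG : ∀ p, G p = 0) :
    ∀ v1 v2 : ℝ × ℝ → ℝ, ContDiffOn ℝ (⊤ : ℕ∞) v1 U → ContDiffOn ℝ (⊤ : ℕ∞) v2 U →
      IsKilling E F G v1 v2 U → ∀ p ∈ U, v1 p = 0 ∧ v2 p = 0 :=
  stmt19_general U hUopen hUsub E F G hE hF hG
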